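/- arXiv:2408.09638 — 2 statements merged into one kernel-verified Lean document; each statement's English description precedes it below -/
import Mathlib

section
/- Let G be a locally compact second countable group, d ≥ 2 an integer, and let φ : G → ℂ be a nonzero continuous M_d-multiplier with a factorization (H₀, …, H_d; ξ₁, …, ξ_d) such that for every i = 1, …, d−1 the sets Aᵢ = {ξ_{i+1}(x_{i+1})⋯ξ_d(x_d)(1) : x_{i+1}, …, x_d ∈ G} and Bᵢ = {(ξ₁(x₁)⋯ξᵢ(xᵢ))*(1) : x₁, …, xᵢ ∈ G} are total in Hᵢ. Then each ξᵢ is continuous for the weak operator topology (i.e. for all v ∈ Hᵢ and w ∈ Hᵢ₋₁ the map x ↦ ⟨ξᵢ(x)v, w⟩ is continuous on G), and each Hᵢ is separable. -/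
open ComplexConjugate Filter Topology
open scoped ComplexInnerProductSpace Pointwise

universe u

/-- A factorization of length `d` of a function `φ : G → ℂ` consists of complex Hilbert
spaces `H 0, …, H d` with `H 0 = H d = ℂ` (witnessed by the linear isometric isomorphisms
`e0`, `ed`) together with bounded maps `xi i : G → B(H (i+1), H i)` such that
`φ (x 1 * ⋯ * x d)` equals `xi 1 (x 1) ∘ ⋯ ∘ xi d (x d)` applied to `1 ∈ ℂ = H d`,
read in `H 0 = ℂ`. -/
structure Factorization (d : ℕ) (G : Type*) [Group G] (φ : G → ℂ) where
  H : Fin (d + 1) → Type u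
  [normed : ∀ i, NormedAddCommGroup (H i)]
  [ips : ∀ i, InnerProductSpace ℂ (H i)]
  [complete : ∀ i, CompleteSpace (H i)]
  e0 : H 0 ≃ₗᵢ[ℂ] ℂ
  ed : H (Fin.last d) ≃ₗᵢ[ℂ] ℂ
  xi : ∀ i : Fin d, G → (H i.succ →L[ℂ] H i.castSucc)
  bdd : ∀ i : Fin d, ∃ M : ℝ, ∀ x : G, ‖xi i x‖ ≤ M
  factor : ∀ x : Fin d → G,
    φ (List.ofFn x).prod =
      e0 (Fin.reverseInduction (motive := fun i => H i) (ed.symm 1)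
        (fun j v => xi j (x j) v) 0)

attribute [instance] Factorization.normed Factorization.ips Factorization.complete

namespace Factorization

variable {d : ℕ} {G : Type*} [Group G] {φ : G → ℂ}

/-- The constant of a factorization, `∏ i, sup_x ‖xi i x‖`. -/
noncomputable def const (F : Factorization d G φ) : ℝ :=
  ∏ i : Fin d, ⨆ x : G, ‖F.xi i x‖

/-- The partial right product `xi (i+1) (x (i+1)) ⋯ xi d (x d) (1) ∈ H i`. -/
noncomputable def rightVec (F : Factorization d G φ) (x : Fin d → G) (i : Fin (d + 1)) :
    F.H i :=
  Fin.reverseInduction (motive := fun i => F.H i) (F.ed.symm 1)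
    (fun j v => F.xi j (x j) v) i

/-- The partial left product `(xi 1 (x 1) ⋯ xi i (x i))^* (1) ∈ H i`. -/
noncomputable def leftVec (F : Factorization d G φ) (x : Fin d → G) (i : Fin (d + 1)) :
    F.H i :=
  Fin.induction (motive := fun i => F.H i) (F.e0.symm 1)
    (fun j w => ContinuousLinearMap.adjoint (F.xi j (x j)) w) i

end Factorization

/-- `φ` is an `M_d`-multiplier: a bounded continuous function admitting a factorization
of length `d`. -/
def IsMdMultiplier (d : ℕ) {G : Type*} [Group G] [TopologicalSpace G] (φ : G → ℂ) : Prop :=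
  Continuous φ ∧ (∃ M : ℝ, ∀ x : G, ‖φ x‖ ≤ M) ∧ Nonempty (Factorization.{0} d G φ)

/-- The `M_d`-multiplier norm `‖φ‖_{M_d}`: the infimum of the constants over all
factorizations of length `d` of `φ`. -/
noncomputable def MdNorm (d : ℕ) {G : Type*} [Group G] (φ : G → ℂ) : ℝ :=
  sInf {C : ℝ | ∃ F : Factorization.{0} d G φ, F.const = C}

/-- A chain of bounded linear maps `eta i : L¹(G, μ) → B(K (i+1), K i)` between complex
Hilbert spaces `K 0, …, K d` with `K 0 = K d = ℂ`. -/
structure L1Chain (d : ℕ) {G : Type*} [Group G] [MeasurableSpace G]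
    (μ : MeasureTheory.Measure G) where
  K : Fin (d + 1) → Type u
  [normed : ∀ i, NormedAddCommGroup (K i)]
  [ips : ∀ i, InnerProductSpace ℂ (K i)]
  [complete : ∀ i, CompleteSpace (K i)]
  e0 : K 0 ≃ₗᵢ[ℂ] ℂ
  ed : K (Fin.last d) ≃ₗᵢ[ℂ] ℂ
  eta : ∀ i : Fin d, MeasureTheory.Lp ℂ 1 μ →L[ℂ] (K i.succ →L[ℂ] K i.castSucc)

attribute [instance] L1Chain.normed L1Chain.ips L1Chain.complete

open MeasureTheory

/-- Convolution of two functions on a group: `(f ∗ g) x = ∫ f y * g (y⁻¹ * x) dμ y`. -/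
noncomputable def conv {G : Type*} [Group G] [MeasurableSpace G] (μ : Measure G)
    (f g : G → ℂ) : G → ℂ :=
  fun x => ∫ y, f y * g (y⁻¹ * x) ∂μ

/-- Iterated convolution of a (nonempty) list of functions. -/
noncomputable def convProd {G : Type*} [Group G] [MeasurableSpace G] (μ : Measure G) :
    List (G → ℂ) → (G → ℂ)
  | [] => fun _ => 0
  | [f] => f
  | f :: g :: l => conv μ f (convProd μ (g :: l))

namespace L1Chain

variable {d : ℕ} {G : Type*} [Group G] [MeasurableSpace G] {μ : Measure G}

/-- The constant `∏ i, ‖eta i‖` of a chain. -/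
noncomputable def const (E : L1Chain d μ) : ℝ :=
  ∏ i : Fin d, ‖E.eta i‖

/-- The partial right product `eta (i+1) (f (i+1)) ⋯ eta d (f d) (1) ∈ K i`. -/
noncomputable def rightVec (E : L1Chain d μ) (f : Fin d → Lp ℂ 1 μ) (i : Fin (d + 1)) :
    E.K i :=
  Fin.reverseInduction (motive := fun i => E.K i) (E.ed.symm 1)
    (fun j v => E.eta j (f j) v) i

/-- The partial left product `(eta 1 (f 1) ⋯ eta i (f i))^* (1) ∈ K i`. -/
noncomputable def leftVec (E : L1Chain d μ) (f : Fin d → Lp ℂ 1 μ) (i : Fin (d + 1)) :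
    E.K i :=
  Fin.induction (motive := fun i => E.K i) (E.e0.symm 1)
    (fun j w => ContinuousLinearMap.adjoint (E.eta j (f j)) w) i

/-- The scalar `eta 1 (f 1) ⋯ eta d (f d) (1) ∈ ℂ`. -/
noncomputable def apply (E : L1Chain d μ) (f : Fin d → Lp ℂ 1 μ) : ℂ :=
  E.e0 (E.rightVec f 0)

end L1Chain

/-!
Pairing the partial products gives
`⟪ξᵢ₊₁(xᵢ₊₁)⋯ξ_d(x_d)(1), (ξ₁(y₁)⋯ξᵢ(yᵢ))^*(1)⟫ = conj φ(y₁⋯yᵢ xᵢ₊₁⋯x_d)`,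
so `x ↦ ⟪ξᵢ₊₁(xᵢ₊₁)⋯ξ_d(x_d)(1), w⟫` is continuous on `G^d` for `w ∈ Bᵢ`, hence, the family
being norm-bounded and `Bᵢ` total, for every `w ∈ Hᵢ`. Since `ξᵢ(z)` maps `Aᵢ` to vectors of
this form, the same extension argument over the total set `Aᵢ` makes `ξᵢ` weakly continuous,
and `Hᵢ` is separable because the image of a countable dense subset of `G^d` is still total.
At the ends, `B₀` and `A_d` are total for free, since `H₀ ≅ H_d ≅ ℂ`.
-/

open Set Submodule

def IsTotalSet (𝕜 : Type*) {E : Type*} [Semiring 𝕜] [TopologicalSpace E] [AddCommMonoid E]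
    [Module 𝕜 E] [ContinuousAdd E] [ContinuousConstSMul 𝕜 E] (s : Set E) : Prop :=
  (span 𝕜 s).topologicalClosure = ⊤

section NormedSpace

variable {𝕜 E : Type*} [NontriviallyNormedField 𝕜] [NormedAddCommGroup E] [NormedSpace 𝕜 E]

theorem isTotalSet_of_mem_of_ne_zero [IsSimpleModule 𝕜 E] {s : Set E} {v : E} (hv : v ∈ s)
    (hv0 : v ≠ 0) : IsTotalSet 𝕜 s :=
  top_unique <| (IsSimpleModule.span_singleton_eq_top 𝕜 hv0).symm.le.trans <|
    (span_mono (singleton_subset_iff.2 hv)).trans (span 𝕜 s).le_topologicalClosure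

/-- For a norm-bounded family of operators, the vectors along which it is pointwise continuous
form a closed subspace, since `v ↦ (a ↦ L a v)` is uniformly continuous into the uniform
convergence topology. -/
theorem IsTotalSet.continuous_apply_of_bounded {α F : Type*} [TopologicalSpace α]
    [NormedAddCommGroup F] [NormedSpace 𝕜 F] {L : α → E →L[𝕜] F} {s : Set E}
    (hs : IsTotalSet 𝕜 s) (hL : ∃ C, ∀ a, ‖L a‖ ≤ C)
    (hcont : ∀ v ∈ s, Continuous fun a => L a v) (v : E) : Continuous fun a => L a v := by
  let p : Submodule 𝕜 E :=
    { carrier := {v | Continuous fun a => L a v}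
      add_mem' := fun {v w} (hv : Continuous _) (hw : Continuous _) => by
        change Continuous fun a => L a (v + w)
        simp only [map_add]
        exact hv.add hw
      zero_mem' := by
        change Continuous fun a => L a 0
        simp only [map_zero]
        exact continuous_const
      smul_mem' := fun c v (hv : Continuous _) => by
        change Continuous fun a => L a (c • v)
        simp only [map_smul]
        exact hv.const_smul c }
  have hequi : UniformEquicontinuous fun a => (L a : E → F) :=
    ((NormedSpace.equicontinuous_TFAE L).out 5 2).1 hL
  have hp : IsClosed (p : Set E) :=
    IsClosed.preimage (uniformEquicontinuous_iff_uniformContinuous.1 hequi).continuous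
      (UniformFun.isClosed_setOfPred_continuous α)
  have hle : (⊤ : Submodule 𝕜 E) ≤ p :=
    hs ▸ topologicalClosure_minimal _ (span_le.2 hcont) hp
  exact hle trivial

end NormedSpace

section InnerProductSpace

variable {𝕜 E : Type*} [RCLike 𝕜] [NormedAddCommGroup E] [InnerProductSpace 𝕜 E]
  [CompleteSpace E]

/-- The image of a countable dense set is still total: by weak continuity, a vector orthogonal
to it is orthogonal to the whole range. -/
theorem IsTotalSet.separableSpace_of_continuous_inner {X : Type*} [TopologicalSpace X]
    [TopologicalSpace.SeparableSpace X] {f : X → E} (hf : IsTotalSet 𝕜 (range f))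
    (hcont : ∀ w, Continuous fun x => inner 𝕜 (f x) w) :
    TopologicalSpace.SeparableSpace E := by
  obtain ⟨D, hDc, hDd⟩ := TopologicalSpace.exists_countable_dense X
  have hD : IsTotalSet 𝕜 (f '' D) := by
    rw [IsTotalSet, topologicalClosure_eq_top_iff, eq_bot_iff]
    intro w hw
    have hzero : (fun x => inner 𝕜 (f x) w) = fun _ => 0 :=
      (hcont w).ext_on hDd continuous_const fun x hx =>
        inner_right_of_mem_orthogonal (subset_span (mem_image_of_mem f hx)) hw
    have hrange : span 𝕜 (range f) ≤ (𝕜 ∙ w)ᗮ := span_le.2 <| by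
      rintro _ ⟨x, rfl⟩
      exact mem_orthogonal_singleton_iff_inner_left.2 (congrFun hzero x)
    have hw' : w ∈ (span 𝕜 (range f))ᗮ := (mem_orthogonal _ _).2 fun u hu =>
      mem_orthogonal_singleton_iff_inner_left.1 (hrange hu)
    rwa [topologicalClosure_eq_top_iff.1 hf] at hw'
  rw [← TopologicalSpace.isSeparable_univ_iff, ← top_coe (R := 𝕜), ← hD,
    topologicalClosure_coe]
  exact (hDc.image f).isSeparable.span.closure

end InnerProductSpace

theorem continuous_list_prod_ofFn {M : Type*} [Monoid M] [TopologicalSpace M] [ContinuousMul M]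
    {n : ℕ} : Continuous fun x : Fin n → M => (List.ofFn x).prod := by
  simp only [List.ofFn_eq_map]
  exact continuous_list_prod _ fun j _ => continuous_apply j

def spliceAt {d : ℕ} {G : Type*} (x y : Fin d → G) (i : Fin (d + 1)) : Fin d → G :=
  fun j => if j.castSucc < i then y j else x j

theorem continuous_spliceAt {d : ℕ} {G : Type*} [TopologicalSpace G] (y : Fin d → G)
    (i : Fin (d + 1)) : Continuous fun x : Fin d → G => spliceAt x y i :=
  continuous_pi fun j => by
    by_cases hj : j.castSucc < i
    · simpa only [spliceAt, if_pos hj] using continuous_const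
    · simpa only [spliceAt, if_neg hj] using continuous_apply j

namespace Factorization

variable {d : ℕ} {G : Type*} [Group G] {φ : G → ℂ} (F : Factorization.{u} d G φ)

theorem rightVec_last (x : Fin d → G) : F.rightVec x (Fin.last d) = F.ed.symm 1 :=
  Fin.reverseInduction_last ..

theorem rightVec_castSucc (x : Fin d → G) (i : Fin d) :
    F.rightVec x i.castSucc = F.xi i (x i) (F.rightVec x i.succ) :=
  Fin.reverseInduction_castSucc ..

theorem leftVec_zero (x : Fin d → G) : F.leftVec x 0 = F.e0.symm 1 := rfl

theorem leftVec_succ (x : Fin d → G) (i : Fin d) :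
    F.leftVec x i.succ = ContinuousLinearMap.adjoint (F.xi i (x i)) (F.leftVec x i.castSucc) :=
  rfl

theorem rightVec_congr {x y : Fin d → G} (i : Fin (d + 1))
    (h : ∀ j : Fin d, i ≤ j.castSucc → x j = y j) : F.rightVec x i = F.rightVec y i := by
  induction i using Fin.reverseInduction with
  | last => rw [rightVec_last, rightVec_last]
  | cast i ih =>
    rw [rightVec_castSucc, rightVec_castSucc, h i le_rfl,
      ih fun j hj => h j (Fin.castSucc_lt_succ.le.trans hj)]

theorem leftVec_congr {x y : Fin d → G} (i : Fin (d + 1))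
    (h : ∀ j : Fin d, j.castSucc < i → x j = y j) : F.leftVec x i = F.leftVec y i := by
  induction i using Fin.induction with
  | zero => rfl
  | succ i ih =>
    rw [leftVec_succ, leftVec_succ, h i Fin.castSucc_lt_succ,
      ih fun j hj => h j (hj.trans Fin.castSucc_lt_succ)]

theorem rightVec_update_castSucc (x : Fin d → G) (i : Fin d) (z : G) :
    F.rightVec (Function.update x i z) i.castSucc = F.xi i z (F.rightVec x i.succ) := by
  rw [rightVec_castSucc, Function.update_self,
    F.rightVec_congr i.succ fun j hj => Function.update_of_ne (by rintro rfl; simp at hj) z x]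

theorem inner_rightVec_leftVec (x : Fin d → G) (i : Fin (d + 1)) :
    ⟪F.rightVec x i, F.leftVec x i⟫ = conj (φ (List.ofFn x).prod) := by
  induction i using Fin.induction with
  | zero =>
    rw [F.factor x, leftVec_zero, ← F.e0.inner_map_map, F.e0.apply_symm_apply,
      RCLike.inner_apply, one_mul]
    rfl
  | succ i ih =>
    rwa [leftVec_succ, ContinuousLinearMap.adjoint_inner_right, ← rightVec_castSucc]

theorem inner_rightVec_leftVec_eq_spliceAt (x y : Fin d → G) (i : Fin (d + 1)) :
    ⟪F.rightVec x i, F.leftVec y i⟫ = conj (φ (List.ofFn (spliceAt x y i)).prod) := by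
  have hx : F.rightVec (spliceAt x y i) i = F.rightVec x i :=
    F.rightVec_congr i fun j hj => if_neg (not_lt.2 hj)
  have hy : F.leftVec (spliceAt x y i) i = F.leftVec y i :=
    F.leftVec_congr i fun j hj => if_pos hj
  rw [← hx, ← hy, inner_rightVec_leftVec]

theorem exists_norm_rightVec_le (i : Fin (d + 1)) : ∃ C, ∀ x, ‖F.rightVec x i‖ ≤ C := by
  induction i using Fin.reverseInduction with
  | last => exact ⟨1, fun x => by simp [rightVec_last]⟩
  | cast i ih =>
    obtain ⟨C, hC⟩ := ih
    obtain ⟨M, hM⟩ := F.bdd i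
    refine ⟨M * C, fun x => ?_⟩
    rw [rightVec_castSucc]
    exact (F.xi i (x i)).le_of_opNorm_le_of_le (hM _) (hC x)

theorem isTotalSet_range_rightVec_last :
    IsTotalSet ℂ (range fun x : Fin d → G => F.rightVec x (Fin.last d)) :=
  have := IsSimpleModule.congr F.ed.toLinearEquiv
  isTotalSet_of_mem_of_ne_zero (mem_range_self 1) (by simp [rightVec_last])

theorem isTotalSet_range_leftVec_zero :
    IsTotalSet ℂ (range fun x : Fin d → G => F.leftVec x 0) :=
  have := IsSimpleModule.congr F.e0.toLinearEquiv
  isTotalSet_of_mem_of_ne_zero (mem_range_self 1) (by simp [leftVec_zero])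

variable [TopologicalSpace G] [IsTopologicalGroup G]

theorem continuous_inner_rightVec (hφ : Continuous φ) (i : Fin (d + 1))
    (hleft : IsTotalSet ℂ (range fun y : Fin d → G => F.leftVec y i)) (w : F.H i) :
    Continuous fun x : Fin d → G => ⟪F.rightVec x i, w⟫ := by
  obtain ⟨C, hC⟩ := F.exists_norm_rightVec_le i
  refine hleft.continuous_apply_of_bounded (L := fun x => innerSL ℂ (F.rightVec x i))
    ⟨C, fun x => (innerSL_apply_norm ℂ _).trans_le (hC x)⟩ ?_ w
  rintro _ ⟨y, rfl⟩
  simp only [innerSL_apply_apply, inner_rightVec_leftVec_eq_spliceAt]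
  exact Complex.continuous_conj.comp <|
    hφ.comp (continuous_list_prod_ofFn.comp (continuous_spliceAt y i))

theorem continuous_inner_xi (hφ : Continuous φ) (i : Fin d)
    (hleft : IsTotalSet ℂ (range fun y : Fin d → G => F.leftVec y i.castSucc))
    (hright : IsTotalSet ℂ (range fun x : Fin d → G => F.rightVec x i.succ))
    (v : F.H i.succ) (w : F.H i.castSucc) : Continuous fun z : G => ⟪F.xi i z v, w⟫ := by
  obtain ⟨M, hM⟩ := F.bdd i
  have hbdd : ∃ C, ∀ z, ‖(innerSL ℂ w).comp (F.xi i z)‖ ≤ C :=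
    ⟨‖w‖ * M, fun z => (ContinuousLinearMap.opNorm_comp_le _ _).trans <| by
      rw [innerSL_apply_norm]; exact mul_le_mul_of_nonneg_left (hM z) (norm_nonneg w)⟩
  have hcont : Continuous fun z : G => ⟪w, F.xi i z v⟫ := by
    refine hright.continuous_apply_of_bounded hbdd ?_ v
    rintro _ ⟨x, rfl⟩
    simp only [ContinuousLinearMap.comp_apply, innerSL_apply_apply, ← rightVec_update_castSucc]
    have hw := (F.continuous_inner_rightVec hφ i.castSucc hleft w).comp
      (continuous_const.update i continuous_id (f := fun _ : G => x))
    simpa only [Function.comp_def, inner_conj_symm, id_eq] using Complex.continuous_conj.comp hw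
  simpa only [Function.comp_def, inner_conj_symm] using Complex.continuous_conj.comp hcont

end Factorization

theorem factorization_wotContinuous_of_total_general
    {G : Type*} [Group G] [TopologicalSpace G] [IsTopologicalGroup G]
    [SecondCountableTopology G]
    (d : ℕ)
    (φ : G → ℂ) (hφ : IsMdMultiplier d φ)
    (F : Factorization.{u} d G φ)
    (htot : ∀ i : Fin (d + 1), i ≠ 0 → i ≠ Fin.last d →
      (Submodule.span ℂ
          (Set.range fun x : Fin d → G => F.rightVec x i)).topologicalClosure = ⊤ ∧
      (Submodule.span ℂ
          (Set.range fun x : Fin d → G => F.leftVec x i)).topologicalClosure = ⊤) :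
    (∀ (i : Fin d) (v : F.H i.succ) (w : F.H i.castSucc),
        Continuous fun x : G => ⟪F.xi i x v, w⟫) ∧
    ∀ i : Fin (d + 1), TopologicalSpace.SeparableSpace (F.H i) := by
  have hleft (i : Fin d) :
      IsTotalSet ℂ (range fun x : Fin d → G => F.leftVec x i.castSucc) := by
    by_cases h0 : i.castSucc = 0
    · rw [h0]; exact F.isTotalSet_range_leftVec_zero
    · exact (htot _ h0 i.castSucc_ne_last).2
  have hright (i : Fin d) :
      IsTotalSet ℂ (range fun x : Fin d → G => F.rightVec x i.succ) := by
    by_cases hl : i.succ = Fin.last d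
    · rw [hl]; exact F.isTotalSet_range_rightVec_last
    · exact (htot _ i.succ_ne_zero hl).1
  refine ⟨fun i => F.continuous_inner_xi hφ.1 i (hleft i) (hright i), fun i => ?_⟩
  by_cases h0 : i = 0
  · subst h0; exact F.e0.symm.surjective.denseRange.separableSpace F.e0.symm.continuous
  by_cases hl : i = Fin.last d
  · subst hl; exact F.ed.symm.surjective.denseRange.separableSpace F.ed.symm.continuous
  exact IsTotalSet.separableSpace_of_continuous_inner (htot i h0 hl).1
    (F.continuous_inner_rightVec hφ.1 i (htot i h0 hl).2)

/-- For a nonzero continuous `M_d`-multiplier of a second countable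
locally compact group, a factorization whose sets `Aᵢ` and `Bᵢ` are total consists of
weak-operator-topology continuous maps between separable Hilbert spaces. -/
theorem factorization_wotContinuous_of_total
    {G : Type*} [Group G] [TopologicalSpace G] [IsTopologicalGroup G]
    [LocallyCompactSpace G] [SecondCountableTopology G]
    (d : ℕ) (hd : 2 ≤ d)
    (φ : G → ℂ) (hφ : IsMdMultiplier d φ) (hφne : φ ≠ 0)
    (F : Factorization.{u} d G φ)
    (htot : ∀ i : Fin (d + 1), i ≠ 0 → i ≠ Fin.last d →
      (Submodule.span ℂ
          (Set.range fun x : Fin d → G => F.rightVec x i)).topologicalClosure = ⊤ ∧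
      (Submodule.span ℂ
          (Set.range fun x : Fin d → G => F.leftVec x i)).topologicalClosure = ⊤) :
    (∀ (i : Fin d) (v : F.H i.succ) (w : F.H i.castSucc),
        Continuous fun x : G => ⟪F.xi i x v, w⟫) ∧
    ∀ i : Fin (d + 1), TopologicalSpace.SeparableSpace (F.H i) :=
  factorization_wotContinuous_of_total_general d φ hφ F htot
end

section
/- Let G be a locally compact second countable group, H a closed subgroup of G, d ≥ 2 an integer, and C > 0. Suppose that for every compact subset K ⊆ G and every ε > 0 there exists φ ∈ C₀(G) admitting a factorization of length d (over G) of constant at most C such that sup_{x∈K} |φ(x) − 1| < ε. Then for every compact subset L ⊆ H and every ε > 0 there exists ψ ∈ C₀(H) admitting a factorization of length d (over H) of constant at most C such that sup_{x∈L} |ψ(x) − 1| < ε. (Consequently Λ_{WH}(H, d) ≤ Λ_{WH}(G, d).) -/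
open ComplexConjugate Filter Topology
open scoped ComplexInnerProductSpace

universe u

open MeasureTheory

namespace Factorization

variable {d : ℕ} {G : Type*} [Group G] {φ : G → ℂ}

def comp {H : Type*} [Group H] (F : Factorization.{u} d G φ) (f : H →* G) :
    Factorization.{u} d H (φ ∘ f) where
  H := F.H
  e0 := F.e0
  ed := F.ed
  xi i x := F.xi i (f x)
  bdd i := (F.bdd i).imp fun _ hM x => hM (f x)
  factor x := by
    rw [Function.comp_apply, map_list_prod, List.map_ofFn]
    exact F.factor (f ∘ x)

theorem const_comp_le {H : Type*} [Group H] (F : Factorization.{u} d G φ) (f : H →* G) :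
    (F.comp f).const ≤ F.const := by
  refine Finset.prod_le_prod (fun i _ => Real.iSup_nonneg fun _ => norm_nonneg _)
    fun i _ => ?_
  obtain ⟨M, hM⟩ := F.bdd i
  exact ciSup_mono_of_forall_exists ⟨M, Set.forall_mem_range.2 hM⟩
    fun x => ⟨f x, le_rfl⟩

end Factorization

theorem mdWH_approx_of_closedSubgroup_general
    {G : Type*} [Group G] [TopologicalSpace G]
    (d : ℕ) (C : ℝ)
    (H : Subgroup G) (hH : IsClosed (H : Set G))
    (h : ∀ K : Set G, IsCompact K → ∀ ε > (0 : ℝ),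
      ∃ φ : G → ℂ, Continuous φ ∧ Tendsto φ (cocompact G) (𝓝 0) ∧
        (∃ F : Factorization.{0} d G φ, F.const ≤ C) ∧
        ∀ x ∈ K, ‖φ x - 1‖ < ε) :
    ∀ L : Set H, IsCompact L → ∀ ε > (0 : ℝ),
      ∃ ψ : H → ℂ, Continuous ψ ∧ Tendsto ψ (cocompact H) (𝓝 0) ∧
        (∃ F : Factorization.{0} d H ψ, F.const ≤ C) ∧
        ∀ x ∈ L, ‖ψ x - 1‖ < ε := by
  intro L hL ε hε
  obtain ⟨φ, hφ_cont, hφ_vanish, ⟨F, hF⟩, hφ_near_one⟩ :=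
    h (Subtype.val '' L) (hL.image continuous_subtype_val) ε hε
  refine ⟨φ ∘ H.subtype, hφ_cont.comp continuous_subtype_val,
    hφ_vanish.comp hH.isClosedEmbedding_subtypeVal.tendsto_cocompact,
    ⟨F.comp H.subtype, (F.const_comp_le H.subtype).trans hF⟩,
    fun x hx => hφ_near_one x ⟨x, hx, rfl⟩⟩

/-- The `C₀` `M_d`-approximation condition with constant `C` passes
from a locally compact second countable group to its closed subgroups; hence
`Λ_WH(H, d) ≤ Λ_WH(G, d)`. -/
theorem mdWH_approx_of_closedSubgroup
    {G : Type*} [Group G] [TopologicalSpace G] [IsTopologicalGroup G]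
    [LocallyCompactSpace G] [SecondCountableTopology G]
    (d : ℕ) (hd : 2 ≤ d) (C : ℝ) (hC : 0 < C)
    (H : Subgroup G) (hH : IsClosed (H : Set G))
    (h : ∀ K : Set G, IsCompact K → ∀ ε > (0 : ℝ),
      ∃ φ : G → ℂ, Continuous φ ∧ Tendsto φ (cocompact G) (𝓝 0) ∧
        (∃ F : Factorization.{0} d G φ, F.const ≤ C) ∧
        ∀ x ∈ K, ‖φ x - 1‖ < ε) :
    ∀ L : Set H, IsCompact L → ∀ ε > (0 : ℝ),
      ∃ ψ : H → ℂ, Continuous ψ ∧ Tendsto ψ (cocompact H) (𝓝 0) ∧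
        (∃ F : Factorization.{0} d H ψ, F.const ≤ C) ∧
        ∀ x ∈ L, ‖ψ x - 1‖ < ε :=
  mdWH_approx_of_closedSubgroup_general d C H hH h
end
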